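/- Let G be a simple 1-dof Henneberg-I graph with base non-edge (v1, v2), and construction step v_n ◁ (u, w) for the last vertex, where at least three vertices u1, u2, u3 are constructed directly on (v1, v2), and G is 1-path. Then the extreme graph G ∪ {(u,w)} is not Triangle-decomposable. -/

import Mathlib

/-!
Suppose the extreme graph `G + uw` has a triangle decomposition. In the construction order every
added vertex has exactly two earlier neighbours. The three common neighbours of the base pair force
it into one piece of the top-level decomposition, and that piece must carry `uw`, since a subgraph
of `G` containing the base pair has at most `2|V| - 4` edges. In each of the two other pieces the
two shared vertices come first in the construction order (the earliest other vertex has both its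
earlier neighbours in the piece), so if the piece had three vertices, its latest vertex would have
degree two with all its edges in the piece; by the 1-path property it would be `vₙ`, and its
neighbours `u, w` would lie in two pieces at once. Hence those pieces are single edges meeting in
a vertex of degree two, which is `vₙ`, and deleting it leaves a triangle decomposition of the
extreme graph of the previous construction. There every vertex has degree at least three, yet the
same argument produces a vertex of degree two.
-/

open SimpleGraph

variable {α : Type*} [DecidableEq α]

/-- Validity of a Henneberg-I construction sequence (list of steps `(v, u, w)` meaning
`v ◁ (u, w)`) starting from the vertex set `S`. -/
def ValidFrom (S : Finset α) : List (α × α × α) → Prop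
  | [] => True
  | (v, u, w) :: rest => v ∉ S ∧ u ∈ S ∧ w ∈ S ∧ u ≠ w ∧ ValidFrom (insert v S) rest

/-- The vertex set built by a Henneberg-I construction from base edge `(a, b)`. -/
def buildVerts (a b : α) (l : List (α × α × α)) : Finset α :=
  l.foldl (fun s p => insert p.1 s) {a, b}

/-- The edge set built by a Henneberg-I construction from base edge `(a, b)`. -/
def buildEdges (a b : α) (l : List (α × α × α)) : Finset (Sym2 α) :=
  l.foldl (fun s p => insert s(p.1, p.2.1) (insert s(p.1, p.2.2) s)) {s(a, b)}

/-- `(V, E)` is a Henneberg-I graph with base edge `(a, b)`. -/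
def IsHennebergI (V : Finset α) (E : Finset (Sym2 α)) (a b : α) : Prop :=
  a ≠ b ∧ ∃ l, ValidFrom {a, b} l ∧ V = buildVerts a b l ∧ E = buildEdges a b l

/-- `(V, E)` is a simple 1-dof Henneberg-I graph with base non-edge `(a, b)`:
adding back the base edge `(a, b)` gives a Henneberg-I graph with base edge `(a, b)`. -/
def IsSimple1Dof (V : Finset α) (E : Finset (Sym2 α)) (a b : α) : Prop :=
  s(a, b) ∉ E ∧ IsHennebergI V (insert s(a, b) E) a b

/-- `(V', E')` is a subgraph of `(V, E)`. -/
def IsSubgraphOf (V : Finset α) (E : Finset (Sym2 α)) (V' : Finset α)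
    (E' : Finset (Sym2 α)) : Prop :=
  V' ⊆ V ∧ E' ⊆ E ∧ ∀ e ∈ E', ∀ v ∈ e, v ∈ V'

/-- `(V, E)` is wellconstrained (Laman): `|E| = 2|V| - 3` and every subgraph on `m`
vertices has at most `2m - 3` edges. -/
def IsLaman (V : Finset α) (E : Finset (Sym2 α)) : Prop :=
  E.card + 3 = 2 * V.card ∧
  ∀ V' E', IsSubgraphOf V E V' E' → E'.card ≤ 2 * V'.card - 3

/-- The degree of the vertex `x` in the edge set `E`. -/
def degreeIn (E : Finset (Sym2 α)) (x : α) : ℕ := (E.filter (fun e => x ∈ e)).card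

/-- A step `p = (v, u, w)` is constructed directly on the base pair `(a, b)`. -/
def OnBase (a b : α) (p : α × α × α) : Prop :=
  (p.2.1 = a ∧ p.2.2 = b) ∨ (p.2.1 = b ∧ p.2.2 = a)

/-- The 1-path property: exactly one vertex other than `a` and `b` has degree 2. -/
def OnePath (V : Finset α) (E : Finset (Sym2 α)) (a b : α) : Prop :=
  ∃! x, x ∈ V ∧ x ≠ a ∧ x ≠ b ∧ degreeIn E x = 2

/-- Triangle-decomposability of a graph `(V, E)`. -/
inductive TriDecomp : Finset α → Finset (Sym2 α) → Prop
  | edge (u v : α) (h : u ≠ v) : TriDecomp {u, v} {s(u, v)}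
  | triangle (u v w : α) (huv : u ≠ v) (hvw : v ≠ w) (huw : u ≠ w) :
      TriDecomp {u, v, w} {s(u, v), s(v, w), s(u, w)}
  | merge (V1 V2 V3 : Finset α) (E1 E2 E3 : Finset (Sym2 α)) (v1 v2 v3 : α)
      (h12 : v1 ≠ v2) (h23 : v2 ≠ v3) (h13 : v1 ≠ v3)
      (t1 : TriDecomp V1 E1) (t2 : TriDecomp V2 E2) (t3 : TriDecomp V3 E3)
      (i12 : V1 ∩ V2 = {v3}) (i23 : V2 ∩ V3 = {v1}) (i13 : V1 ∩ V3 = {v2})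
      (e12 : E1 ∩ E2 = ∅) (e23 : E2 ∩ E3 = ∅) (e13 : E1 ∩ E3 = ∅) :
      TriDecomp (V1 ∪ V2 ∪ V3) (E1 ∪ E2 ∪ E3)

/-- `H` is a minor of `G`: branch-set definition. -/
def HasMinor {V W : Type*} (G : SimpleGraph V) (H : SimpleGraph W) : Prop :=
  ∃ f : W → Set V,
    (∀ w, (f w).Nonempty) ∧
    (∀ w, (G.induce (f w)).Connected) ∧
    (∀ w w', w ≠ w' → Disjoint (f w) (f w')) ∧
    ∀ w w', H.Adj w w' → ∃ x ∈ f w, ∃ y ∈ f w', G.Adj x y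



instance (a b : α) : DecidablePred (OnBase a b) := fun p => by
  unfold OnBase; infer_instance

section Degree

variable {E F : Finset (Sym2 α)} {e : Sym2 α} {x : α}

theorem degreeIn_mono (h : E ⊆ F) (x : α) : degreeIn E x ≤ degreeIn F x :=
  Finset.card_le_card (Finset.filter_subset_filter _ h)

theorem degreeIn_insert_of_notMem (hx : x ∉ e) : degreeIn (insert e E) x = degreeIn E x := by
  rw [degreeIn, degreeIn, Finset.filter_insert, if_neg hx]

theorem degreeIn_insert (he : e ∉ E) (x : α) :
    degreeIn (insert e E) x = degreeIn E x + if x ∈ e then 1 else 0 := by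
  split_ifs with hx
  · rw [degreeIn, degreeIn, Finset.filter_insert, if_pos hx,
      Finset.card_insert_of_notMem fun h => he (Finset.mem_filter.1 h).1]
  · rw [degreeIn_insert_of_notMem hx, add_zero]

theorem card_le_degreeIn {N : Finset α} (h : ∀ y ∈ N, s(y, x) ∈ E) : N.card ≤ degreeIn E x := by
  rw [← Finset.card_image_of_injective N fun y z => Sym2.congr_left.1]
  refine Finset.card_le_card fun e he => ?_
  obtain ⟨y, hy, rfl⟩ := Finset.mem_image.1 he
  exact Finset.mem_filter.2 ⟨h y hy, Sym2.mem_mk_right _ _⟩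

end Degree

namespace TriDecomp

variable {V : Finset α} {E : Finset (Sym2 α)}

theorem card_add_three (h : TriDecomp V E) : E.card + 3 = 2 * V.card := by
  induction h with
  | edge u v huv => simp [huv]
  | triangle u v w huv hvw huw => simp [huv, hvw, huw, huv.symm]
  | merge V₁ V₂ V₃ E₁ E₂ E₃ _ _ _ h₁₂ _ _ _ _ _ i₁₂ i₂₃ i₁₃ e₁₂ e₂₃ e₁₃ ih₁ ih₂ ih₃ =>
    have hV₁₂ := Finset.card_union_add_card_inter V₁ V₂
    have hV := Finset.card_union_add_card_inter (V₁ ∪ V₂) V₃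
    have hE₁₂ := Finset.card_union_add_card_inter E₁ E₂
    have hE := Finset.card_union_add_card_inter (E₁ ∪ E₂) E₃
    rw [i₁₂, Finset.card_singleton] at hV₁₂
    rw [Finset.union_inter_distrib_right, i₁₃, i₂₃, ← Finset.insert_eq,
      Finset.card_pair h₁₂.symm] at hV
    rw [e₁₂, Finset.card_empty] at hE₁₂
    rw [Finset.union_inter_distrib_right, e₁₃, e₂₃, Finset.empty_union, Finset.card_empty] at hE
    omega

theorem mem_of_mem_edge (h : TriDecomp V E) : ∀ e ∈ E, ∀ x ∈ e, x ∈ V := by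
  induction h with
  | edge u v huv => simp
  | triangle u v w huv hvw huw => simp
  | merge V₁ V₂ V₃ E₁ E₂ E₃ _ _ _ _ _ _ _ _ _ _ _ _ _ _ _ ih₁ ih₂ ih₃ =>
    simp only [Finset.mem_union]
    rintro e ((he | he) | he) x hx
    exacts [Or.inl (Or.inl (ih₁ e he x hx)), Or.inl (Or.inr (ih₂ e he x hx)),
      Or.inr (ih₃ e he x hx)]

theorem not_isDiag (h : TriDecomp V E) : ∀ e ∈ E, ¬e.IsDiag := by
  induction h with
  | edge u v huv => simpa using huv
  | triangle u v w huv hvw huw => simp [huv, hvw, huw]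
  | merge V₁ V₂ V₃ E₁ E₂ E₃ _ _ _ _ _ _ _ _ _ _ _ _ _ _ _ ih₁ ih₂ ih₃ =>
    simp only [Finset.mem_union]
    rintro e ((he | he) | he)
    exacts [ih₁ e he, ih₂ e he, ih₃ e he]

theorem eq_singleton_of_pair {x y : α} (h : TriDecomp {x, y} E) (hxy : x ≠ y) :
    E = {s(x, y)} := by
  have hcard := h.card_add_three
  rw [Finset.card_pair hxy] at hcard
  obtain ⟨e, rfl⟩ := Finset.card_eq_one.1 (by omega : E.card = 1)
  have hmem := h.mem_of_mem_edge e (Finset.mem_singleton_self e)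
  have hdiag := h.not_isDiag e (Finset.mem_singleton_self e)
  induction e using Sym2.ind with
  | _ p q =>
    simp only [Finset.mem_insert, Finset.mem_singleton, Sym2.mem_iff, forall_eq_or_imp,
      forall_eq, Sym2.mk_isDiag_iff] at hmem hdiag
    rcases hmem with ⟨rfl | rfl, rfl | rfl⟩ <;> simp_all [Sym2.eq_swap]

theorem erase_of_triangle {p q r : α} (hpq : p ≠ q) (hqr : q ≠ r) (hpr : p ≠ r) :
    degreeIn {s(p, q), s(q, r), s(p, r)} p = 2 ∧
      TriDecomp (({p, q, r} : Finset α).erase p)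
        (({s(p, q), s(q, r), s(p, r)} : Finset (Sym2 α)).filter (p ∉ ·)) := by
  refine ⟨by simp [degreeIn, Finset.filter_insert, Finset.filter_singleton, hpq, hpr, hqr], ?_⟩
  convert TriDecomp.edge q r hqr using 1
  · simp [hpq, hpr]
  · simp [Finset.filter_insert, Finset.filter_singleton, hpq, hpr]

theorem erase_of_two_edges {W : Finset α} {F : Finset (Sym2 α)} {x y z : α}
    (hT : TriDecomp W F) (hx : x ∉ W) (hy : y ∈ W) (hz : z ∈ W) (hyz : y ≠ z) :
    degreeIn (F ∪ {s(y, x)} ∪ {s(z, x)}) x = 2 ∧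
      TriDecomp ((W ∪ {y, x} ∪ {z, x}).erase x) ((F ∪ {s(y, x)} ∪ {s(z, x)}).filter (x ∉ ·)) := by
  have hF : ∀ e ∈ F, x ∉ e := fun e he h => hx (hT.mem_of_mem_edge e he x h)
  refine ⟨?_, ?_⟩
  · rw [degreeIn, Finset.filter_union, Finset.filter_union, Finset.filter_false_of_mem hF,
      Finset.filter_singleton, Finset.filter_singleton, if_pos (Sym2.mem_mk_right _ _),
      if_pos (Sym2.mem_mk_right _ _), Finset.empty_union, ← Finset.insert_eq]
    exact Finset.card_pair (mt Sym2.congr_left.1 hyz)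
  · have hW : (W ∪ {y, x} ∪ {z, x}).erase x = W := by
      ext t
      simp only [Finset.mem_erase, Finset.mem_union, Finset.mem_insert, Finset.mem_singleton]
      constructor
      · rintro ⟨ht, (ht' | rfl | rfl) | rfl | rfl⟩
        exacts [ht', hy, absurd rfl ht, hz, absurd rfl ht]
      · exact fun ht => ⟨fun h => hx (h ▸ ht), Or.inl (Or.inl ht)⟩
    rw [hW, Finset.filter_union, Finset.filter_union, Finset.filter_true_of_mem hF]
    simpa [Finset.filter_singleton] using hT

end TriDecomp

section Merge

variable {W₁ W₂ W₃ : Finset α} {F₁ F₂ F₃ : Finset (Sym2 α)}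

theorem mem_piece_of_mem_union (h₁ : ∀ e ∈ F₁, ∀ x ∈ e, x ∈ W₁)
    (h₂ : ∀ e ∈ F₂, ∀ x ∈ e, x ∈ W₂) (h₃ : ∀ e ∈ F₃, ∀ x ∈ e, x ∈ W₃) {e : Sym2 α}
    (he : e ∈ F₁ ∪ F₂ ∪ F₃) {x y : α} (hx : x ∈ e) (hy : y ∈ e) :
    (x ∈ W₁ ∧ y ∈ W₁) ∨ (x ∈ W₂ ∧ y ∈ W₂) ∨ (x ∈ W₃ ∧ y ∈ W₃) := by
  simp only [Finset.mem_union] at he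
  rcases he with (he | he) | he
  exacts [Or.inl ⟨h₁ e he x hx, h₁ e he y hy⟩, Or.inr (Or.inl ⟨h₂ e he x hx, h₂ e he y hy⟩),
    Or.inr (Or.inr ⟨h₃ e he x hx, h₃ e he y hy⟩)]

theorem exists_piece_of_three_common_neighbours (h₁ : ∀ e ∈ F₁, ∀ x ∈ e, x ∈ W₁)
    (h₂ : ∀ e ∈ F₂, ∀ x ∈ e, x ∈ W₂) (h₃ : ∀ e ∈ F₃, ∀ x ∈ e, x ∈ W₃) {c₁ c₂ c₃ : α}
    (h₂₃ : c₂ ≠ c₃)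
    (i₁₂ : W₁ ∩ W₂ = {c₃}) (i₂₃ : W₂ ∩ W₃ = {c₁}) (i₁₃ : W₁ ∩ W₃ = {c₂})
    {a b : α} {N : Finset α} (hN : 3 ≤ N.card)
    (hadj : ∀ x ∈ N, s(x, a) ∈ F₁ ∪ F₂ ∪ F₃ ∧ s(x, b) ∈ F₁ ∪ F₂ ∪ F₃) :
    (a ∈ W₁ ∧ b ∈ W₁) ∨ (a ∈ W₂ ∧ b ∈ W₂) ∨ (a ∈ W₃ ∧ b ∈ W₃) := by
  simp only [Finset.eq_singleton_iff_unique_mem, Finset.mem_inter] at i₁₂ i₂₃ i₁₃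
  have hpieces : ∀ x ∈ N, ((x ∈ W₁ ∧ a ∈ W₁) ∨ (x ∈ W₂ ∧ a ∈ W₂) ∨ (x ∈ W₃ ∧ a ∈ W₃)) ∧
      ((x ∈ W₁ ∧ b ∈ W₁) ∨ (x ∈ W₂ ∧ b ∈ W₂) ∨ (x ∈ W₃ ∧ b ∈ W₃)) := fun x hx =>
    ⟨mem_piece_of_mem_union h₁ h₂ h₃ (hadj x hx).1 (Sym2.mem_mk_left _ _) (Sym2.mem_mk_right _ _),
      mem_piece_of_mem_union h₁ h₂ h₃ (hadj x hx).2 (Sym2.mem_mk_left _ _) (Sym2.mem_mk_right _ _)⟩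
  by_contra hab
  -- A common neighbour of `a` and `b` lies in two pieces, so it is a shared vertex.
  have hsub : N ⊆ {c₁, c₂, c₃} := by
    intro x hx
    have := hpieces x hx
    simp only [Finset.mem_insert, Finset.mem_singleton]
    grind
  have hNc : N = {c₁, c₂, c₃} :=
    Finset.eq_of_subset_of_card_le hsub (Finset.card_le_three.trans hN)
  -- Each `cᵢ` then separates `a` from `b` within its two pieces, so `a` and `b` each lie in two
  -- of the three pieces, hence in a common one.
  have hc₁ := hpieces c₁ (by simp [hNc])
  have hc₂ := hpieces c₂ (by simp [hNc])
  have hc₃ := hpieces c₃ (by simp [hNc])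
  grind

end Merge

section Henneberg

variable {a b u v w : α} {l l₁ l₂ : List (α × α × α)} {p q : α × α × α}

def oneDofEdges (a b : α) (l : List (α × α × α)) : Finset (Sym2 α) :=
  (buildEdges a b l).erase s(a, b)

def extremeEdges (a b : α) (l : List (α × α × α)) (u w : α) : Finset (Sym2 α) :=
  insert s(u, w) (oneDofEdges a b l)

theorem buildVerts_append_singleton :
    buildVerts a b (l ++ [p]) = insert p.1 (buildVerts a b l) := by
  simp [buildVerts]

theorem buildEdges_append_singleton :
    buildEdges a b (l ++ [p]) = insert s(p.1, p.2.1) (insert s(p.1, p.2.2) (buildEdges a b l)) := by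
  simp [buildEdges]

theorem buildVerts_eq : buildVerts a b l = (a :: b :: l.map Prod.fst).toFinset := by
  induction l using List.reverseRecOn with
  | nil => ext; simp [buildVerts]
  | append_singleton l p ih =>
    rw [buildVerts_append_singleton, ih]
    ext
    simp only [Finset.mem_insert, List.mem_toFinset, List.mem_cons, List.map_append,
      List.mem_append, List.map_cons, List.map_nil, List.mem_nil_iff]
    tauto

theorem mem_buildVerts {x : α} : x ∈ buildVerts a b l ↔ x = a ∨ x = b ∨ ∃ p ∈ l, p.1 = x := by
  simp [buildVerts_eq]

theorem mem_buildEdges {e : Sym2 α} :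
    e ∈ buildEdges a b l ↔ e = s(a, b) ∨ ∃ p ∈ l, e = s(p.1, p.2.1) ∨ e = s(p.1, p.2.2) := by
  induction l using List.reverseRecOn with
  | nil => simp [buildEdges]
  | append_singleton l p ih =>
    rw [buildEdges_append_singleton, Finset.mem_insert, Finset.mem_insert, ih]
    simp only [List.mem_append, List.mem_singleton]
    constructor
    · rintro (h | h | h | ⟨q, hq, h⟩)
      exacts [Or.inr ⟨p, Or.inr rfl, Or.inl h⟩, Or.inr ⟨p, Or.inr rfl, Or.inr h⟩, Or.inl h,
        Or.inr ⟨q, Or.inl hq, h⟩]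
    · rintro (h | ⟨q, hq | rfl, h⟩)
      exacts [Or.inr (Or.inr (Or.inl h)), Or.inr (Or.inr (Or.inr ⟨q, hq, h⟩)), by tauto]

theorem validFrom_append {S : Finset α} :
    ValidFrom S (l₁ ++ l₂) ↔
      ValidFrom S l₁ ∧ ValidFrom (l₁.foldl (fun s p => insert p.1 s) S) l₂ := by
  induction l₁ generalizing S with
  | nil => simp [ValidFrom]
  | cons p l₁ ih =>
    obtain ⟨v, u, w⟩ := p
    simp only [List.cons_append, ValidFrom, ih, List.foldl_cons]
    tauto

theorem validFrom_append_singleton :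
    ValidFrom {a, b} (l ++ [p]) ↔ ValidFrom {a, b} l ∧ p.1 ∉ buildVerts a b l ∧
      p.2.1 ∈ buildVerts a b l ∧ p.2.2 ∈ buildVerts a b l ∧ p.2.1 ≠ p.2.2 := by
  obtain ⟨v, u, w⟩ := p
  simp [validFrom_append, ValidFrom, buildVerts]

theorem ValidFrom.step (hl : ValidFrom {a, b} (l₁ ++ p :: l₂)) :
    p.1 ∉ buildVerts a b l₁ ∧ p.2.1 ∈ buildVerts a b l₁ ∧ p.2.2 ∈ buildVerts a b l₁ ∧
      p.2.1 ≠ p.2.2 := by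
  rw [← List.singleton_append, ← List.append_assoc, validFrom_append,
    validFrom_append_singleton] at hl
  exact hl.1.2

theorem ValidFrom.fst_ne (hl : ValidFrom {a, b} l) (hp : p ∈ l) : p.1 ≠ a ∧ p.1 ≠ b := by
  obtain ⟨l₁, l₂, rfl⟩ := List.append_of_mem hp
  have h := hl.step.1
  rw [mem_buildVerts] at h
  tauto

theorem ValidFrom.nodup_fst (hl : ValidFrom {a, b} l) : (l.map Prod.fst).Nodup := by
  induction l using List.reverseRecOn with
  | nil => simp
  | append_singleton l p ih =>
    obtain ⟨hl, hp, -⟩ := validFrom_append_singleton.1 hl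
    rw [mem_buildVerts] at hp
    simp only [List.map_append, List.map_cons, List.map_nil, List.nodup_append, ih hl,
      List.nodup_singleton, List.mem_map, List.mem_singleton]
    aesop

theorem ValidFrom.eq_of_fst_eq (hl : ValidFrom {a, b} l) (hp : p ∈ l) (hq : q ∈ l)
    (h : p.1 = q.1) : p = q :=
  List.inj_on_of_nodup_map hl.nodup_fst hp hq h

def rank (a b : α) (l : List (α × α × α)) (x : α) : ℕ := (a :: b :: l.map Prod.fst).idxOf x

theorem ValidFrom.rank_lt (hl : ValidFrom {a, b} l) (hp : p ∈ l) :
    rank a b l p.2.1 < rank a b l p.1 ∧ rank a b l p.2.2 < rank a b l p.1 := by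
  obtain ⟨l₁, l₂, rfl⟩ := List.append_of_mem hp
  obtain ⟨h₀, h₁, h₂, -⟩ := hl.step
  rw [buildVerts_eq, List.mem_toFinset] at h₀ h₁ h₂
  have hsplit : a :: b :: (l₁ ++ p :: l₂).map Prod.fst =
      (a :: b :: l₁.map Prod.fst) ++ p.1 :: l₂.map Prod.fst := by simp
  have hlt : ∀ x ∈ a :: b :: l₁.map Prod.fst,
      rank a b (l₁ ++ p :: l₂) x < rank a b (l₁ ++ p :: l₂) p.1 := by
    intro x hx
    rw [rank, rank, hsplit, List.idxOf_append_of_mem hx, List.idxOf_append_of_notMem h₀,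
      List.idxOf_cons_self]
    exact List.idxOf_lt_length_of_mem hx
  exact ⟨hlt _ h₁, hlt _ h₂⟩

theorem ValidFrom.snd_ne (hl : ValidFrom {a, b} l) (hp : p ∈ l) : p.2.1 ≠ p.2.2 := by
  obtain ⟨l₁, l₂, rfl⟩ := List.append_of_mem hp
  exact hl.step.2.2.2

theorem ValidFrom.snd_mem_buildVerts (hl : ValidFrom {a, b} l) (hp : p ∈ l) :
    p.2.1 ∈ buildVerts a b l ∧ p.2.2 ∈ buildVerts a b l := by
  obtain ⟨l₁, l₂, rfl⟩ := List.append_of_mem hp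
  have hsub : buildVerts a b l₁ ⊆ buildVerts a b (l₁ ++ p :: l₂) := by
    intro x
    simp only [mem_buildVerts, List.mem_append]
    tauto
  exact ⟨hsub hl.step.2.1, hsub hl.step.2.2.1⟩

theorem ValidFrom.mem_oneDofEdges (hl : ValidFrom {a, b} l) {e : Sym2 α} :
    e ∈ oneDofEdges a b l ↔ ∃ p ∈ l, e = s(p.1, p.2.1) ∨ e = s(p.1, p.2.2) := by
  rw [oneDofEdges, Finset.mem_erase, mem_buildEdges]
  constructor
  · rintro ⟨hne, rfl | h⟩
    exacts [absurd rfl hne, h]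
  · rintro ⟨p, hp, h⟩
    refine ⟨?_, Or.inr ⟨p, hp, h⟩⟩
    have := hl.fst_ne hp
    rcases h with rfl | rfl <;> simp <;> tauto

theorem ValidFrom.mem_buildVerts_of_mem (hl : ValidFrom {a, b} l) {e : Sym2 α}
    (he : e ∈ oneDofEdges a b l) {x : α} (hx : x ∈ e) : x ∈ buildVerts a b l := by
  obtain ⟨p, hp, rfl | rfl⟩ := hl.mem_oneDofEdges.1 he <;> rcases Sym2.mem_iff.1 hx with rfl | rfl
  all_goals first
    | exact mem_buildVerts.2 (Or.inr (Or.inr ⟨_, hp, rfl⟩))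
    | exact (hl.snd_mem_buildVerts hp).1
    | exact (hl.snd_mem_buildVerts hp).2

theorem ValidFrom.three_le_card_buildVerts (hab : a ≠ b) (hl : ValidFrom {a, b} l)
    (hne : l ≠ []) : 3 ≤ (buildVerts a b l).card := by
  obtain ⟨p, hp⟩ := List.exists_mem_of_ne_nil l hne
  obtain ⟨hpa, hpb⟩ := hl.fst_ne hp
  calc 3 = ({a, b, p.1} : Finset α).card := by
        rw [Finset.card_insert_of_notMem (by simp [hab, hpa.symm]), Finset.card_pair hpb.symm]
    _ ≤ _ := Finset.card_le_card fun x hx => by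
        simp only [Finset.mem_insert, Finset.mem_singleton] at hx
        rw [mem_buildVerts]
        rcases hx with rfl | rfl | rfl
        exacts [Or.inl rfl, Or.inr (Or.inl rfl), Or.inr (Or.inr ⟨p, hp, rfl⟩)]

theorem ValidFrom.two_le_degreeIn (hl : ValidFrom {a, b} l) (hp : p ∈ l) :
    2 ≤ degreeIn (oneDofEdges a b l) p.1 := by
  rw [← Finset.card_pair (hl.snd_ne hp)]
  refine card_le_degreeIn fun y hy => ?_
  rw [Sym2.eq_swap]
  rcases Finset.mem_insert.1 hy with rfl | hy
  · exact hl.mem_oneDofEdges.2 ⟨p, hp, Or.inl rfl⟩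
  rw [Finset.mem_singleton.1 hy]
  exact hl.mem_oneDofEdges.2 ⟨p, hp, Or.inr rfl⟩

theorem ValidFrom.degreeIn_le_two (hl : ValidFrom {a, b} l) (hp : p ∈ l)
    (htop : ∀ e ∈ oneDofEdges a b l, p.1 ∈ e → ∀ x ∈ e, rank a b l x ≤ rank a b l p.1) :
    degreeIn (oneDofEdges a b l) p.1 ≤ 2 := by
  refine (Finset.card_le_card fun e he => ?_).trans
    (Finset.card_le_two (a := s(p.1, p.2.1)) (b := s(p.1, p.2.2)))
  obtain ⟨he, hpe⟩ := Finset.mem_filter.1 he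
  obtain ⟨q, hq, hqe⟩ := hl.mem_oneDofEdges.1 he
  by_cases hqp : q.1 = p.1
  · obtain rfl := hl.eq_of_fst_eq hq hp hqp
    rcases hqe with rfl | rfl <;> simp
  · have hq₁ := htop e he hpe q.1 (by rcases hqe with rfl | rfl <;> exact Sym2.mem_mk_left _ _)
    have hr := hl.rank_lt hq
    rcases hqe with rfl | rfl <;> rcases Sym2.mem_iff.1 hpe with h | h <;>
      first | exact absurd h.symm hqp | rw [h] at hq₁; omega

theorem ValidFrom.exists_degreeIn_le_two_of_closed (hl : ValidFrom {a, b} l) {W : Finset α}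
    {s₁ s₂ : α} (hW : W ⊆ buildVerts a b l) (hcard : 2 < W.card)
    (hclosed : ∀ x ∈ W, x ≠ s₁ → x ≠ s₂ →
      x ≠ a ∧ x ≠ b ∧ ∀ e ∈ oneDofEdges a b l, x ∈ e → ∀ z ∈ e, z ∈ W) :
    ∃ y ∈ W, y ≠ s₁ ∧ y ≠ s₂ ∧ degreeIn (oneDofEdges a b l) y ≤ 2 := by
  have hstep : ∀ x ∈ W, x ≠ s₁ → x ≠ s₂ → ∃ p ∈ l, p.1 = x := by
    intro x hx h₁ h₂
    have := mem_buildVerts.1 (hW hx)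
    have := hclosed x hx h₁ h₂
    tauto
  have hne : (W \ {s₁, s₂}).Nonempty := by
    rw [Finset.nonempty_iff_ne_empty, Ne, Finset.sdiff_eq_empty_iff_subset]
    intro h
    have := (Finset.card_le_card h).trans Finset.card_le_two
    omega
  obtain ⟨z, hz, hzmin⟩ := (W \ {s₁, s₂}).exists_min_image (rank a b l) hne
  simp only [Finset.mem_sdiff, Finset.mem_insert, Finset.mem_singleton, not_or] at hz hzmin
  obtain ⟨hzW, hz₁, hz₂⟩ := hz
  -- The two earlier neighbours of the earliest unshared vertex lie in `W`, so they are `s₁, s₂`.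
  have hshared : rank a b l s₁ < rank a b l z ∧ rank a b l s₂ < rank a b l z := by
    obtain ⟨p, hp, rfl⟩ := hstep z hzW hz₁ hz₂
    have hr := hl.rank_lt hp
    have hback : ∀ y, s(p.1, y) ∈ oneDofEdges a b l → rank a b l y < rank a b l p.1 →
        y = s₁ ∨ y = s₂ := by
      intro y hy hry
      by_contra h
      push Not at h
      have := hzmin y ⟨(hclosed _ hzW hz₁ hz₂).2.2 _ hy (Sym2.mem_mk_left _ _) y
        (Sym2.mem_mk_right _ _), h⟩
      omega
    have h₁ := hback _ (hl.mem_oneDofEdges.2 ⟨p, hp, Or.inl rfl⟩) hr.1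
    have h₂ := hback _ (hl.mem_oneDofEdges.2 ⟨p, hp, Or.inr rfl⟩) hr.2
    have := hl.snd_ne hp
    rcases h₁ with rfl | rfl <;> rcases h₂ with h₂ | h₂
    exacts [absurd h₂ this.symm, h₂ ▸ hr, h₂ ▸ hr.symm, absurd h₂ this.symm]
  obtain ⟨y, hy, hymax⟩ := W.exists_max_image (rank a b l) ⟨z, hzW⟩
  have hzy := hymax z hzW
  have hy₁ : y ≠ s₁ := by rintro rfl; omega
  have hy₂ : y ≠ s₂ := by rintro rfl; omega
  obtain ⟨p, hp, rfl⟩ := hstep y hy hy₁ hy₂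
  exact ⟨p.1, hy, hy₁, hy₂, hl.degreeIn_le_two hp fun e he hpe x hx =>
    hymax x ((hclosed _ hy hy₁ hy₂).2.2 e he hpe x hx)⟩

theorem ValidFrom.card_add_four_le (hab : a ≠ b) (hl : ValidFrom {a, b} l) {W : Finset α}
    {F : Finset (Sym2 α)} (ha : a ∈ W) (hb : b ∈ W) (hF : F ⊆ oneDofEdges a b l)
    (hFW : ∀ e ∈ F, ∀ x ∈ e, x ∈ W) : F.card + 4 ≤ 2 * W.card := by
  set P := l.toFinset.filter (fun p => p.1 ∈ W)
  have hFP : F ⊆ P.image (fun p => s(p.1, p.2.1)) ∪ P.image (fun p => s(p.1, p.2.2)) := by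
    intro e he
    obtain ⟨p, hp, hpe⟩ := hl.mem_oneDofEdges.1 (hF he)
    have hpP : p ∈ P := Finset.mem_filter.2 ⟨List.mem_toFinset.2 hp,
      hFW e he p.1 (by rcases hpe with rfl | rfl <;> exact Sym2.mem_mk_left _ _)⟩
    rcases hpe with rfl | rfl
    exacts [Finset.mem_union_left _ (Finset.mem_image_of_mem _ hpP),
      Finset.mem_union_right _ (Finset.mem_image_of_mem _ hpP)]
  have hPW : P.card ≤ (W \ {a, b}).card := by
    refine Finset.card_le_card_of_injOn Prod.fst (fun p hp => ?_)
      fun p hp q hq => hl.eq_of_fst_eq (List.mem_toFinset.1 (Finset.mem_filter.1 hp).1)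
        (List.mem_toFinset.1 (Finset.mem_filter.1 hq).1)
    obtain ⟨hp, hpW⟩ := Finset.mem_filter.1 hp
    have := hl.fst_ne (List.mem_toFinset.1 hp)
    simp only [Finset.mem_coe, Finset.mem_sdiff, Finset.mem_insert, Finset.mem_singleton]
    tauto
  have hab2 : ({a, b} : Finset α) ⊆ W := Finset.insert_subset ha (Finset.singleton_subset_iff.2 hb)
  have hWab := Finset.card_sdiff_of_subset hab2
  have hW2 := Finset.card_le_card hab2
  rw [Finset.card_pair hab] at hWab hW2
  have := (Finset.card_le_card hFP).trans
    ((Finset.card_union_le _ _).trans (add_le_add Finset.card_image_le Finset.card_image_le))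
  omega

theorem ValidFrom.exists_common_neighbours (hl : ValidFrom {a, b} l)
    (h3 : 3 ≤ l.countP (fun p => decide (OnBase a b p))) :
    ∃ N : Finset α, 3 ≤ N.card ∧
      ∀ x ∈ N, s(x, a) ∈ oneDofEdges a b l ∧ s(x, b) ∈ oneDofEdges a b l := by
  refine ⟨((l.filter fun p => decide (OnBase a b p)).map Prod.fst).toFinset, ?_, ?_⟩
  · rwa [List.toFinset_card_of_nodup (hl.nodup_fst.sublist (List.filter_sublist.map _)),
      List.length_map, ← List.countP_eq_length_filter]
  · intro x hx
    simp only [List.mem_toFinset, List.mem_map, List.mem_filter, decide_eq_true_eq] at hx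
    obtain ⟨p, ⟨hp, hpab⟩, rfl⟩ := hx
    have h₁ := hl.mem_oneDofEdges.2 ⟨p, hp, Or.inl rfl⟩
    have h₂ := hl.mem_oneDofEdges.2 ⟨p, hp, Or.inr rfl⟩
    rcases hpab with ⟨ha, hb⟩ | ⟨hb, ha⟩
    · rw [ha] at h₁; rw [hb] at h₂; exact ⟨h₁, h₂⟩
    · rw [ha] at h₂; rw [hb] at h₁; exact ⟨h₂, h₁⟩

theorem ValidFrom.card_le_two_of_closed (hl : ValidFrom {a, b} l) {W : Finset α} {s₁ s₂ : α}
    (hW : W ⊆ buildVerts a b l) (huw : ¬(u ∈ W ∧ w ∈ W))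
    (hdeg2 : ∀ y ∈ buildVerts a b l, degreeIn (extremeEdges a b l u w) y = 2 →
      s(y, u) ∈ extremeEdges a b l u w ∧ s(y, w) ∈ extremeEdges a b l u w)
    (hclosed : ∀ x ∈ W, x ≠ s₁ → x ≠ s₂ →
      x ≠ a ∧ x ≠ b ∧ ∀ e ∈ extremeEdges a b l u w, x ∈ e → ∀ z ∈ e, z ∈ W) :
    W.card ≤ 2 := by
  by_contra! hcard
  obtain ⟨y, hyW, hy₁, hy₂, hdeg⟩ := hl.exists_degreeIn_le_two_of_closed hW hcard fun x hx h₁ h₂ =>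
    have ⟨ha, hb, h⟩ := hclosed x hx h₁ h₂
    ⟨ha, hb, fun e he => h e (Finset.mem_insert_of_mem he)⟩
  obtain ⟨hya, hyb, hyW'⟩ := hclosed y hyW hy₁ hy₂
  have hmem : ∀ z, s(y, z) ∈ extremeEdges a b l u w → z ∈ W := fun z hz =>
    hyW' _ hz (Sym2.mem_mk_left _ _) z (Sym2.mem_mk_right _ _)
  have huwy : y ∉ s(u, w) := by
    intro h
    have hW' : ∀ z ∈ s(u, w), z ∈ W := hyW' _ (Finset.mem_insert_self _ _) h
    exact huw ⟨hW' u (Sym2.mem_mk_left _ _), hW' w (Sym2.mem_mk_right _ _)⟩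
  obtain ⟨p, hp, rfl⟩ : ∃ p ∈ l, p.1 = y := by
    have := mem_buildVerts.1 (hW hyW)
    tauto
  have h2 : degreeIn (extremeEdges a b l u w) p.1 = 2 := by
    rw [extremeEdges, degreeIn_insert_of_notMem huwy]
    exact le_antisymm hdeg (hl.two_le_degreeIn hp)
  obtain ⟨hu, hw⟩ := hdeg2 _ (hW hyW) h2
  exact huw ⟨hmem u hu, hmem w hw⟩

theorem ValidFrom.eq_pair_of_piece (hl : ValidFrom {a, b} l) (huw : u ≠ w)
    (hdeg2 : ∀ y ∈ buildVerts a b l, degreeIn (extremeEdges a b l u w) y = 2 →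
      s(y, u) ∈ extremeEdges a b l u w ∧ s(y, w) ∈ extremeEdges a b l u w)
    {W W₁ W₂ : Finset α} {s₁ s₂ : α} (hs : s₁ ≠ s₂) (hs₁ : s₁ ∈ W) (hs₂ : s₂ ∈ W)
    (hW : W ⊆ buildVerts a b l) (h₁ : ∀ x ∈ W, x ∈ W₁ → x = s₁) (h₂ : ∀ x ∈ W, x ∈ W₂ → x = s₂)
    (ha : a ∈ W₁) (hb : b ∈ W₁) (hu : u ∈ W₁) (hw : w ∈ W₁)
    (hsplit : ∀ e ∈ extremeEdges a b l u w, ∀ x ∈ e, ∀ z ∈ e,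
      (x ∈ W₁ ∧ z ∈ W₁) ∨ (x ∈ W ∧ z ∈ W) ∨ (x ∈ W₂ ∧ z ∈ W₂)) :
    W = {s₁, s₂} := by
  refine (Finset.eq_of_subset_of_card_le
    (Finset.insert_subset hs₁ (Finset.singleton_subset_iff.2 hs₂)) ?_).symm
  rw [Finset.card_pair hs]
  refine hl.card_le_two_of_closed (s₁ := s₁) (s₂ := s₂) hW
    (fun h => huw ((h₁ u h.1 hu).trans (h₁ w h.2 hw).symm)) hdeg2 fun x hx hx₁ hx₂ => ?_
  have hxW₁ : x ∉ W₁ := fun h => hx₁ (h₁ x hx h)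
  have hxW₂ : x ∉ W₂ := fun h => hx₂ (h₂ x hx h)
  refine ⟨fun h => hxW₁ (h ▸ ha), fun h => hxW₁ (h ▸ hb), fun e he hxe z hz => ?_⟩
  have := hsplit e he x hxe z hz
  tauto

theorem ValidFrom.exists_erase_of_merge (hab : a ≠ b) (hl : ValidFrom {a, b} l)
    (huw : u ≠ w)
    (hdeg2 : ∀ y ∈ buildVerts a b l, degreeIn (extremeEdges a b l u w) y = 2 →
      s(y, u) ∈ extremeEdges a b l u w ∧ s(y, w) ∈ extremeEdges a b l u w)
    {WA WB WC : Finset α} {FA FB FC : Finset (Sym2 α)} {sAB sAC sBC : α}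
    (tA : TriDecomp WA FA) (tB : TriDecomp WB FB) (tC : TriDecomp WC FC)
    (iAB : WA ∩ WB = {sAB}) (iAC : WA ∩ WC = {sAC}) (iBC : WB ∩ WC = {sBC})
    (hAB_AC : sAB ≠ sAC) (hAB_BC : sAB ≠ sBC) (hAC_BC : sAC ≠ sBC)
    (hV : buildVerts a b l = WA ∪ WB ∪ WC) (hE : extremeEdges a b l u w = FA ∪ FB ∪ FC)
    (ha : a ∈ WA) (hb : b ∈ WA) :
    ∃ x ∈ buildVerts a b l, degreeIn (extremeEdges a b l u w) x = 2 ∧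
      TriDecomp ((buildVerts a b l).erase x) ((extremeEdges a b l u w).filter (x ∉ ·)) := by
  simp only [Finset.eq_singleton_iff_unique_mem, Finset.mem_inter] at iAB iAC iBC
  have hsplit : ∀ e ∈ extremeEdges a b l u w, ∀ x ∈ e, ∀ z ∈ e,
      (x ∈ WA ∧ z ∈ WA) ∨ (x ∈ WB ∧ z ∈ WB) ∨ (x ∈ WC ∧ z ∈ WC) := fun e he x hx z hz =>
    mem_piece_of_mem_union tA.mem_of_mem_edge tB.mem_of_mem_edge tC.mem_of_mem_edge
      (hE ▸ he) hx hz
  -- The extreme edge lies in the piece containing the base pair: the other edges are too few.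
  have hFA : s(u, w) ∈ FA := by
    by_contra h
    have hsub : FA ⊆ oneDofEdges a b l := fun e he =>
      (Finset.mem_insert.1 (hE ▸ Finset.mem_union_left _ (Finset.mem_union_left _ he) :
        e ∈ extremeEdges a b l u w)).resolve_left (by rintro rfl; exact h he)
    have := hl.card_add_four_le hab ha hb hsub tA.mem_of_mem_edge
    have := tA.card_add_three
    omega
  have hu : u ∈ WA := tA.mem_of_mem_edge _ hFA u (Sym2.mem_mk_left _ _)
  have hw : w ∈ WA := tA.mem_of_mem_edge _ hFA w (Sym2.mem_mk_right _ _)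
  have hWB : WB = {sAB, sBC} := hl.eq_pair_of_piece huw hdeg2 hAB_BC iAB.1.2 iBC.1.1
    (hV ▸ fun x hx => by simp [hx]) (fun x hx hxA => iAB.2 x ⟨hxA, hx⟩)
    (fun x hx hxC => iBC.2 x ⟨hx, hxC⟩) ha hb hu hw hsplit
  have hWC : WC = {sAC, sBC} := hl.eq_pair_of_piece huw hdeg2 hAC_BC iAC.1.2 iBC.1.2
    (hV ▸ fun x hx => by simp [hx]) (fun x hx hxA => iAC.2 x ⟨hxA, hx⟩)
    (fun x hx hxB => iBC.2 x ⟨hxB, hx⟩) ha hb hu hw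
    fun e he x hx z hz => (hsplit e he x hx z hz).imp_right Or.symm
  have hsBC : sBC ∉ WA := fun h => hAB_BC (iAB.2 sBC ⟨h, iBC.1.1⟩).symm
  rw [hWB] at tB
  rw [hWC] at tC
  rw [hV, hE, hWB, hWC, tB.eq_singleton_of_pair hAB_BC, tC.eq_singleton_of_pair hAC_BC]
  exact ⟨sBC, by simp, tA.erase_of_two_edges hsBC iAB.1.1 iAC.1.1 hAB_AC⟩

theorem ValidFrom.exists_erase_of_triDecomp (hab : a ≠ b) (hl : ValidFrom {a, b} l) (hne : l ≠ []) (huw : u ≠ w)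
    (hbase : s(u, w) = s(a, b) ∨ 3 ≤ l.countP (fun p => decide (OnBase a b p)))
    (hdeg2 : ∀ y ∈ buildVerts a b l, degreeIn (extremeEdges a b l u w) y = 2 →
      s(y, u) ∈ extremeEdges a b l u w ∧ s(y, w) ∈ extremeEdges a b l u w)
    (hT : TriDecomp (buildVerts a b l) (extremeEdges a b l u w)) :
    ∃ x ∈ buildVerts a b l, degreeIn (extremeEdges a b l u w) x = 2 ∧
      TriDecomp ((buildVerts a b l).erase x) ((extremeEdges a b l u w).filter (x ∉ ·)) := by
  generalize hV : buildVerts a b l = V at hT ⊢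
  generalize hE : extremeEdges a b l u w = E at hT ⊢
  cases hT with
  | edge p q hpq =>
    have := hl.three_le_card_buildVerts hab hne
    rw [hV] at this
    have := Finset.card_le_two (a := p) (b := q)
    omega
  | triangle p q r hpq hqr hpr => exact ⟨p, by simp, TriDecomp.erase_of_triangle hpq hqr hpr⟩
  | merge W₁ W₂ W₃ F₁ F₂ F₃ c₁ c₂ c₃ h₁₂ h₂₃ h₁₃ t₁ t₂ t₃ i₁₂ i₂₃ i₁₃ _ _ _ =>
    have hpiece : (a ∈ W₁ ∧ b ∈ W₁) ∨ (a ∈ W₂ ∧ b ∈ W₂) ∨ (a ∈ W₃ ∧ b ∈ W₃) := by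
      rcases hbase with h | h
      · have : s(a, b) ∈ F₁ ∪ F₂ ∪ F₃ := hE ▸ h ▸ Finset.mem_insert_self _ _
        exact mem_piece_of_mem_union t₁.mem_of_mem_edge t₂.mem_of_mem_edge t₃.mem_of_mem_edge
          this (Sym2.mem_mk_left _ _) (Sym2.mem_mk_right _ _)
      · obtain ⟨N, hN, hadj⟩ := hl.exists_common_neighbours h
        exact exists_piece_of_three_common_neighbours t₁.mem_of_mem_edge t₂.mem_of_mem_edge
          t₃.mem_of_mem_edge h₂₃ i₁₂ i₂₃ i₁₃ hN fun x hx =>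
            hE ▸ ⟨Finset.mem_insert_of_mem (hadj x hx).1, Finset.mem_insert_of_mem (hadj x hx).2⟩
    rw [← hV, ← hE]
    rcases hpiece with ⟨ha, hb⟩ | ⟨ha, hb⟩ | ⟨ha, hb⟩
    · exact hl.exists_erase_of_merge hab huw hdeg2 t₁ t₂ t₃ i₁₂ i₁₃ i₂₃
        h₂₃.symm h₁₃.symm h₁₂.symm hV hE ha hb
    · exact hl.exists_erase_of_merge hab huw hdeg2 t₂ t₁ t₃
        ((Finset.inter_comm _ _).trans i₁₂) i₂₃ i₁₃ h₁₃.symm h₂₃.symm h₁₂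
        (hV.trans (by ac_rfl)) (hE.trans (by ac_rfl)) ha hb
    · exact hl.exists_erase_of_merge hab huw hdeg2 t₃ t₁ t₂
        ((Finset.inter_comm _ _).trans i₁₃) ((Finset.inter_comm _ _).trans i₂₃) i₁₂
        h₁₂.symm h₂₃ h₁₃ (hV.trans (by ac_rfl)) (hE.trans (by ac_rfl)) ha hb

theorem ValidFrom.notMem_of_mem_oneDofEdges (hl : ValidFrom {a, b} (l ++ [(v, u, w)]))
    {e : Sym2 α} (he : e ∈ oneDofEdges a b l) : v ∉ e := fun hve =>
  have hl' := validFrom_append_singleton.1 hl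
  hl'.2.1 (hl'.1.mem_buildVerts_of_mem he hve)

theorem ValidFrom.oneDofEdges_append_singleton (hl : ValidFrom {a, b} (l ++ [(v, u, w)])) :
    oneDofEdges a b (l ++ [(v, u, w)]) = insert s(v, u) (insert s(v, w) (oneDofEdges a b l)) := by
  obtain ⟨hva, hvb⟩ : v ≠ a ∧ v ≠ b := hl.fst_ne (p := (v, u, w)) (by simp)
  rw [oneDofEdges, buildEdges_append_singleton, Finset.erase_insert_of_ne,
    Finset.erase_insert_of_ne] <;> [rfl; simp [hva, hvb]; simp [hva, hvb]]

theorem ValidFrom.degreeIn_append_singleton (hl : ValidFrom {a, b} (l ++ [(v, u, w)])) (x : α) :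
    degreeIn (oneDofEdges a b (l ++ [(v, u, w)])) x = degreeIn (oneDofEdges a b l) x +
      (if x ∈ s(v, w) then 1 else 0) + (if x ∈ s(v, u) then 1 else 0) := by
  have huw := (validFrom_append_singleton.1 hl).2.2.2.2
  rw [hl.oneDofEdges_append_singleton, degreeIn_insert, degreeIn_insert]
  · exact fun h => hl.notMem_of_mem_oneDofEdges h (Sym2.mem_mk_left _ _)
  · rw [Finset.mem_insert, not_or]
    exact ⟨mt Sym2.congr_right.1 huw,
      fun h => hl.notMem_of_mem_oneDofEdges h (Sym2.mem_mk_left _ _)⟩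

theorem ValidFrom.degreeIn_last (hl : ValidFrom {a, b} (l ++ [(v, u, w)])) :
    degreeIn (oneDofEdges a b (l ++ [(v, u, w)])) v = 2 := by
  rw [hl.degreeIn_append_singleton, if_pos (Sym2.mem_mk_left _ _), if_pos (Sym2.mem_mk_left _ _),
    degreeIn,
    Finset.card_eq_zero.2 (Finset.filter_eq_empty_iff.2 fun _ => hl.notMem_of_mem_oneDofEdges)]

theorem ValidFrom.extremeEdges_filter_last (hl : ValidFrom {a, b} (l ++ [(v, u, w)])) :
    (extremeEdges a b (l ++ [(v, u, w)]) u w).filter (v ∉ ·) = extremeEdges a b l u w := by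
  obtain ⟨-, hv, hu, hw, -⟩ := validFrom_append_singleton.1 hl
  have hvu : v ≠ u := fun h => hv (h ▸ hu)
  have hvw : v ≠ w := fun h => hv (h ▸ hw)
  rw [extremeEdges, hl.oneDofEdges_append_singleton, extremeEdges, Finset.filter_insert,
    Finset.filter_insert, Finset.filter_insert,
    Finset.filter_true_of_mem fun _ => hl.notMem_of_mem_oneDofEdges]
  simp [hvu, hvw]

theorem ValidFrom.degreeIn_extremeEdges_eq (hl : ValidFrom {a, b} (l ++ [(v, u, w)]))
    (huwE : s(u, w) ∉ oneDofEdges a b (l ++ [(v, u, w)])) {y : α} (hy : y ∈ buildVerts a b l) :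
    degreeIn (extremeEdges a b l u w) y = degreeIn (oneDofEdges a b (l ++ [(v, u, w)])) y := by
  obtain ⟨-, hv, -, -, huw⟩ := validFrom_append_singleton.1 hl
  have hyv : y ≠ v := fun h => hv (h ▸ hy)
  rw [hl.degreeIn_append_singleton, extremeEdges, degreeIn_insert fun h =>
    huwE (hl.oneDofEdges_append_singleton ▸ Finset.mem_insert_of_mem (Finset.mem_insert_of_mem h))]
  rcases eq_or_ne y u with rfl | hyu
  · simp [hyv, huw]
  rcases eq_or_ne y w with rfl | hyw
  · simp [hyv, hyu]
  simp [hyv, hyu, hyw]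

theorem eq_base_or_three_le_countP
    (h3 : 3 ≤ (l ++ [(v, u, w)]).countP (fun p => decide (OnBase a b p))) :
    s(u, w) = s(a, b) ∨ 3 ≤ l.countP (fun p => decide (OnBase a b p)) := by
  by_cases hob : OnBase a b (v, u, w)
  · left
    rcases hob with ⟨h₁, h₂⟩ | ⟨h₁, h₂⟩
    · exact congrArg₂ (fun x y => s(x, y)) h₁ h₂
    · exact (congrArg₂ (fun x y => s(x, y)) h₁ h₂).trans Sym2.eq_swap
  · right
    simpa [List.countP_append, hob] using h3

theorem ValidFrom.three_le_degreeIn_of_onePath (hl : ValidFrom {a, b} l)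
    (h1p : OnePath (buildVerts a b l) (oneDofEdges a b l) a b)
    (h3 : 3 ≤ l.countP (fun p => decide (OnBase a b p))) {v : α} (hv : v ∈ buildVerts a b l)
    (hva : v ≠ a) (hvb : v ≠ b) (hv2 : degreeIn (oneDofEdges a b l) v = 2) :
    ∀ x ∈ buildVerts a b l, x ≠ v → 3 ≤ degreeIn (oneDofEdges a b l) x := by
  intro x hx hxv
  obtain ⟨N, hN, hadj⟩ := hl.exists_common_neighbours h3
  rcases mem_buildVerts.1 hx with rfl | rfl | ⟨p, hp, rfl⟩
  · exact hN.trans (card_le_degreeIn fun y hy => (hadj y hy).1)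
  · exact hN.trans (card_le_degreeIn fun y hy => (hadj y hy).2)
  · have h2 := hl.two_le_degreeIn hp
    have hne2 : degreeIn (oneDofEdges a b l) p.1 ≠ 2 := fun h =>
      hxv (h1p.unique ⟨hx, (hl.fst_ne hp).1, (hl.fst_ne hp).2, h⟩ ⟨hv, hva, hvb, hv2⟩)
    omega

theorem ValidFrom.notMem_oneDofEdges (hab : a ≠ b) (hl : ValidFrom {a, b} l)
    (hT : TriDecomp (buildVerts a b l) (extremeEdges a b l u w)) :
    s(u, w) ∉ oneDofEdges a b l := by
  intro h
  have hcard := hT.card_add_three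
  rw [extremeEdges, Finset.insert_eq_of_mem h] at hcard
  have := hl.card_add_four_le hab (mem_buildVerts.2 (Or.inl rfl))
    (mem_buildVerts.2 (Or.inr (Or.inl rfl))) subset_rfl fun e he x hx =>
      hl.mem_buildVerts_of_mem he hx
  omega

theorem ValidFrom.triDecomp_extremeEdges_dropLast (hab : a ≠ b)
    (hl : ValidFrom {a, b} (l ++ [(v, u, w)]))
    (h3 : 3 ≤ (l ++ [(v, u, w)]).countP (fun p => decide (OnBase a b p)))
    (hdeg3 : ∀ x ∈ buildVerts a b (l ++ [(v, u, w)]), x ≠ v →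
      3 ≤ degreeIn (oneDofEdges a b (l ++ [(v, u, w)])) x)
    (hT : TriDecomp (buildVerts a b (l ++ [(v, u, w)])) (extremeEdges a b (l ++ [(v, u, w)]) u w)) :
    TriDecomp (buildVerts a b l) (extremeEdges a b l u w) := by
  obtain ⟨-, hv, -, -, huw⟩ := validFrom_append_singleton.1 hl
  dsimp only at hv huw
  have hdeg2 : ∀ y ∈ buildVerts a b (l ++ [(v, u, w)]),
      degreeIn (extremeEdges a b (l ++ [(v, u, w)]) u w) y = 2 → y = v := fun y hy h => by
    by_contra hyv
    have := hdeg3 y hy hyv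
    have : degreeIn (oneDofEdges a b (l ++ [(v, u, w)])) y ≤
        degreeIn (extremeEdges a b (l ++ [(v, u, w)]) u w) y :=
      degreeIn_mono (Finset.subset_insert _ _) y
    omega
  obtain ⟨x, hx, hx2, hT'⟩ := hl.exists_erase_of_triDecomp hab (by simp) huw (Or.inr h3)
    (fun y hy h => by
      obtain rfl := hdeg2 y hy h
      simp [extremeEdges, hl.oneDofEdges_append_singleton]) hT
  obtain rfl := (hdeg2 x hx hx2).symm
  rwa [buildVerts_append_singleton, Finset.erase_insert hv, hl.extremeEdges_filter_last] at hT'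

theorem not_triDecomp_extremeEdges (hab : a ≠ b) (hl : ValidFrom {a, b} (l ++ [(v, u, w)]))
    (h1p : OnePath (buildVerts a b (l ++ [(v, u, w)])) (oneDofEdges a b (l ++ [(v, u, w)])) a b)
    (h3 : 3 ≤ (l ++ [(v, u, w)]).countP (fun p => decide (OnBase a b p))) :
    ¬TriDecomp (buildVerts a b (l ++ [(v, u, w)])) (extremeEdges a b (l ++ [(v, u, w)]) u w) := by
  intro hT
  obtain ⟨hl', hv, -, -, huw⟩ := validFrom_append_singleton.1 hl
  dsimp only at hv huw
  have hvV : v ∈ buildVerts a b (l ++ [(v, u, w)]) :=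
    mem_buildVerts.2 (Or.inr (Or.inr ⟨(v, u, w), by simp, rfl⟩))
  have hvab := hl.fst_ne (p := (v, u, w)) (by simp)
  have hdeg3 := hl.three_le_degreeIn_of_onePath h1p h3 hvV hvab.1 hvab.2 hl.degreeIn_last
  have hT' := hl.triDecomp_extremeEdges_dropLast hab h3 hdeg3 hT
  have hmin : ∀ y ∈ buildVerts a b l, 3 ≤ degreeIn (extremeEdges a b l u w) y := fun y hy => by
    rw [hl.degreeIn_extremeEdges_eq (hl.notMem_oneDofEdges hab hT) hy]
    refine hdeg3 y ?_ fun h => hv (h ▸ hy)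
    rw [buildVerts_append_singleton]
    exact Finset.mem_insert_of_mem hy
  have hne : l ≠ [] := by
    rintro rfl
    simpa using h3.trans List.countP_le_length
  obtain ⟨y, hy, hy2, -⟩ := hl'.exists_erase_of_triDecomp hab hne huw
    (eq_base_or_three_le_countP h3) (fun y hy h => by have := hmin y hy; omega) hT'
  have := hmin y hy
  omega

end Henneberg

/-- For a 1-path simple 1-dof Henneberg-I graph whose last construction
step is `v_n ◁ (u, w)` and in which at least three vertices are constructed directly on
the base pair, the extreme graph `G ∪ {(u, w)}` is not Triangle-decomposable. -/
theorem stmt11 (v1 v2 : α) (hab : v1 ≠ v2) (l : List (α × α × α))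
    (hl : ValidFrom {v1, v2} l) (hne : l ≠ [])
    (vn u w : α) (hlast : l.getLast hne = (vn, u, w))
    (V : Finset α) (E : Finset (Sym2 α))
    (hV : V = buildVerts v1 v2 l) (hE : E = (buildEdges v1 v2 l).erase s(v1, v2))
    (h1p : OnePath V E v1 v2)
    (h3 : 3 ≤ l.countP (fun p => decide (OnBase v1 v2 p))) :
    ¬ TriDecomp V (insert s(u, w) E) := by
  obtain ⟨l', rfl⟩ : ∃ l', l = l' ++ [(vn, u, w)] :=
    ⟨l.dropLast, by rw [← hlast, List.dropLast_append_getLast]⟩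
  subst hV hE
  exact not_triDecomp_extremeEdges hab hl h1p h3
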